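/- Let f : ℝ → ℝ be infinitely differentiable and x ∈ ℝ a first-order critical point, i.e. f′(x) = 0 and f″(x) ≠ 0. Let d₀ = 1/10, d₁ = 6/10, d₂ = 3/10 and define, for small h > 0, the WENO-UD5 weights with exponent p = 1 and ε = 0: αₖ(h) = dₖ(1 + ζ(h)/βₖ(h)) (the WENO-LOC smoothness indicators βₖ(h) being nonzero for all sufficiently small h) and ωₖ(h) = αₖ(h)/(α₀(h)+α₁(h)+α₂(h)). Then for each k ∈ {0,1,2}, ωₖ(h) − dₖ = O(h²) as h → 0⁺. -/

import Mathlib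

open Filter Asymptotics Topology

section helpers

lemma taylor_aux (g : ℝ → ℝ) (hg : ContDiff ℝ (⊤ : ℕ∞) g) :
    ∃ C : ℝ, ∀ t ∈ Set.Icc (0:ℝ) 1,
      |g t - (g 0 + iteratedDeriv 1 g 0 * t + iteratedDeriv 2 g 0 * t ^ 2 / 2
          + iteratedDeriv 3 g 0 * t ^ 3 / 6)| ≤ C * t ^ 4 := by
  obtain ⟨C, hC⟩ := exists_taylor_mean_remainder_bound (zero_le_one)
    ((hg.of_le (WithTop.coe_le_coe.mpr le_top)).contDiffOn : ContDiffOn ℝ (3+1 : ℕ) g (Set.Icc 0 1))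
  refine ⟨C, fun t ht => ?_⟩
  have h4 := hC t ht
  rw [taylor_within_apply] at h4
  have hiter : ∀ k : ℕ, iteratedDerivWithin k g (Set.Icc (0:ℝ) 1) 0 = iteratedDeriv k g 0 := by
    intro k
    have hg' : ContDiff ℝ ((⊤:ℕ∞) : WithTop ℕ∞) g := hg.of_le (by simp)
    have h1 : HasFTaylorSeriesUpToOn (⊤:ℕ∞) g (ftaylorSeries ℝ g) (Set.Icc (0:ℝ) 1) :=
      (contDiff_iff_ftaylorSeries.mp hg').hasFTaylorSeriesUpToOn _
    have h2 := h1.eq_iteratedFDerivWithin_of_uniqueDiffOn (m := k) (by exact_mod_cast le_top)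
      (uniqueDiffOn_Icc one_pos)
      (Set.mem_Icc.mpr ⟨le_refl 0, zero_le_one⟩)
    rw [iteratedDerivWithin_eq_iteratedFDerivWithin, ← h2]
    rfl
  simp only [hiter, Finset.sum_range_succ, Finset.sum_range_zero, smul_eq_mul, sub_zero] at h4
  rw [Real.norm_eq_abs] at h4
  calc |g t - (g 0 + iteratedDeriv 1 g 0 * t + iteratedDeriv 2 g 0 * t ^ 2 / 2
          + iteratedDeriv 3 g 0 * t ^ 3 / 6)|
      = |g t - (0 + (Nat.factorial 0 : ℝ)⁻¹ * t ^ 0 * iteratedDeriv 0 g 0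
          + (Nat.factorial 1 : ℝ)⁻¹ * t ^ 1 * iteratedDeriv 1 g 0
          + (Nat.factorial 2 : ℝ)⁻¹ * t ^ 2 * iteratedDeriv 2 g 0
          + (Nat.factorial 3 : ℝ)⁻¹ * t ^ 3 * iteratedDeriv 3 g 0)| := by
        norm_num [Nat.factorial]; ring_nf
    _ ≤ C * t ^ 4 := h4

lemma pow_isBigO_aux {m n : ℕ} (h : n ≤ m) :
    (fun t : ℝ => t ^ m) =O[𝓝[>] (0:ℝ)] fun t => t ^ n := by
  rw [isBigO_iff]
  refine ⟨1, ?_⟩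
  filter_upwards [Ioc_mem_nhdsGT (zero_lt_one)] with t ht
  rw [Real.norm_eq_abs, Real.norm_eq_abs, abs_of_nonneg (pow_nonneg ht.1.le m),
    abs_of_nonneg (pow_nonneg ht.1.le n), one_mul]
  exact pow_le_pow_of_le_one ht.1.le ht.2 h

lemma ev_small_aux (C b : ℝ) (n : ℕ) (hb : 0 < b) :
    ∀ᶠ t in 𝓝[>] (0:ℝ), C * t ^ (n+1) < b := by
  have ht : Tendsto (fun t : ℝ => C * t ^ (n+1)) (𝓝[>] (0:ℝ)) (𝓝 0) := by
    have h0 : Tendsto (fun t : ℝ => C * t ^ (n+1)) (𝓝 (0:ℝ)) (𝓝 (C * 0 ^ (n+1))) :=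
      ((continuous_const.mul (continuous_pow (n+1))).tendsto 0)
    simpa using h0.mono_left nhdsWithin_le_nhds
  exact ht.eventually (gt_mem_nhds hb)

lemma aux_final (d rk r0 r1 r2 t C : ℝ) (hd0 : 0 ≤ d) (hd1 : d ≤ 1)
    (h0 : |r0| ≤ C * t) (h1 : |r1| ≤ C * t) (h2 : |r2| ≤ C * t)
    (hk : rk = r0 ∨ rk = r1 ∨ rk = r2) (hsmall : C * t ≤ 1/4) :
    |d * (1 + rk) / (1/10 * (1 + r0) + 6/10 * (1 + r1) + 3/10 * (1 + r2)) - d|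
      ≤ 3 * (C * t) := by
  have hCt : 0 ≤ C * t := le_trans (abs_nonneg _) h0
  obtain ⟨h0a, h0b⟩ := abs_le.mp h0
  obtain ⟨h1a, h1b⟩ := abs_le.mp h1
  obtain ⟨h2a, h2b⟩ := abs_le.mp h2
  set S := 1/10 * (1 + r0) + 6/10 * (1 + r1) + 3/10 * (1 + r2) with hS
  clear_value S
  have hSpos : 3/4 ≤ S := by rw [hS]; linarith
  have hSne : S ≠ 0 := by linarith
  have hrk : |rk| ≤ C * t := by rcases hk with rfl | rfl | rfl <;> assumption
  obtain ⟨hka, hkb⟩ := abs_le.mp hrk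
  have key : d * (1 + rk) / S - d = d * (rk - (S - 1)) / S := by
    field_simp
    ring
  rw [key, abs_div, abs_of_pos (by linarith : (0:ℝ) < S)]
  rw [div_le_iff₀ (by linarith : (0:ℝ) < S)]
  have hnum : |d * (rk - (S - 1))| ≤ 2 * (C * t) := by
    rw [abs_mul, abs_of_nonneg hd0]
    have habs : |rk - (S - 1)| ≤ 2 * (C * t) := by
      rw [abs_le]; constructor <;> [nlinarith; nlinarith]
    calc d * |rk - (S - 1)| ≤ 1 * (2 * (C * t)) := by
          apply mul_le_mul hd1 habs (abs_nonneg _) zero_le_one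
      _ = 2 * (C * t) := by ring
  nlinarith

lemma dsq_lb (a2v a3v : ℝ) (ha2 : a2v ≠ 0) (D : ℝ → ℝ)
    (hD : (fun h => D h - (a2v * h^2 + a3v * h^3)) =O[𝓝[>] (0:ℝ)] fun h => h^4) :
    ∀ᶠ h in 𝓝[>] (0:ℝ), a2v^2/4 * h^4 ≤ (D h)^2 := by
  obtain ⟨C, hC⟩ := isBigO_iff.mp hD
  have ha2' : 0 < |a2v| / 4 := by positivity
  filter_upwards [hC, self_mem_nhdsWithin, ev_small_aux C (|a2v|/4) 1 ha2',
    ev_small_aux (|a3v|) (|a2v|/4) 0 ha2'] with h hCh hpos h1 h2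
  rw [Set.mem_Ioi] at hpos
  rw [Real.norm_eq_abs, Real.norm_eq_abs, abs_of_nonneg (pow_nonneg hpos.le 4)] at hCh
  -- lower bound for |P h|
  have t1 := abs_sub_abs_le_abs_sub (a2v * h^2) (a2v * h^2 + a3v * h^3)
  have e1 : a2v * h^2 - (a2v * h^2 + a3v * h^3) = -(a3v * h^3) := by ring
  rw [e1, abs_neg] at t1
  have e2 : |a2v * h^2| = |a2v| * h^2 := by
    rw [abs_mul, abs_pow, abs_of_pos hpos]
  have e3 : |a3v * h^3| = |a3v| * h^3 := by
    rw [abs_mul, abs_pow, abs_of_pos hpos]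
  rw [e2, e3] at t1
  -- |D h| lower bound
  have t2 := abs_sub_abs_le_abs_sub (a2v * h^2 + a3v * h^3) (D h)
  rw [abs_sub_comm] at t2
  have m1 : |a3v| * h^3 ≤ |a2v|/4 * h^2 := by nlinarith [sq_nonneg h]
  have m2 : C * h^4 ≤ |a2v|/4 * h^2 := by nlinarith [sq_nonneg h]
  have hDlb : |a2v|/2 * h^2 ≤ |D h| := by
    simp only [pow_succ, pow_zero, one_mul] at h1 h2
    linarith
  have hsq := mul_self_le_mul_self (by positivity) hDlb
  have e4 : |D h| * |D h| = D h * D h := abs_mul_abs_self _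
  have e5 : |a2v| * |a2v| = a2v * a2v := abs_mul_abs_self _
  have e6 : |a2v|/2 * h^2 * (|a2v|/2 * h^2) = a2v^2/4 * h^4 := by
    rw [show |a2v|/2 * h^2 * (|a2v|/2 * h^2) = |a2v| * |a2v| * (h^4/4) from by ring, e5]; ring
  nlinarith [hsq, e4, e6]

lemma r_bound_aux (ζf βf : ℝ → ℝ) (c K0 : ℝ) (hc : 0 < c) (hK0 : 0 ≤ K0)
    (hzb : ∀ᶠ h in 𝓝[>] (0:ℝ), |ζf h| ≤ K0 * h^6)
    (hβb : ∀ᶠ h in 𝓝[>] (0:ℝ), c * h^4 ≤ βf h) :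
    ∀ᶠ h in 𝓝[>] (0:ℝ), |ζf h / βf h| ≤ (K0/c) * h^2 := by
  filter_upwards [hzb, hβb, self_mem_nhdsWithin] with h h1 h2 hpos
  rw [Set.mem_Ioi] at hpos
  have hβpos : 0 < βf h := lt_of_lt_of_le (by positivity) h2
  rw [abs_div, abs_of_pos hβpos, div_le_iff₀ hβpos]
  have s1 : (K0/c) * h^2 * (c * h^4) ≤ (K0/c) * h^2 * βf h :=
    mul_le_mul_of_nonneg_left h2 (by positivity)
  have s2 : (K0/c) * h^2 * (c * h^4) = K0 * h^6 := by
    field_simp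
  linarith

end helpers

/-- The WENO-LOC smoothness indicators of `f` at center `x` with mesh size `h`. -/
noncomputable def betaLOC (f : ℝ → ℝ) (x h : ℝ) : Fin 3 → ℝ :=
  ![(1/2) * ((f (x - h) - f (x - 2*h))^2 + (f x - f (x - h))^2)
      + (f x - 2 * f (x - h) + f (x - 2*h))^2,
    (1/2) * ((f x - f (x - h))^2 + (f (x + h) - f x)^2)
      + (f (x - h) - 2 * f x + f (x + h))^2,
    (1/2) * ((f (x + h) - f x)^2 + (f (x + 2*h) - f (x + h))^2)
      + (f x - 2 * f (x + h) + f (x + 2*h))^2]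

/-- The global smoothness indicator `ζ` of `f` at center `x` with mesh size `h`. -/
noncomputable def zetaUD (f : ℝ → ℝ) (x h : ℝ) : ℝ :=
  |(f (x - 2*h) - 2 * f (x - h) + f x)^2
    - 2 * (f (x - h) - 2 * f x + f (x + h))^2
    + (f x - 2 * f (x + h) + f (x + 2*h))^2|

/-- The linear (ideal) weights `d₀ = 1/10`, `d₁ = 6/10`, `d₂ = 3/10`. -/
noncomputable def dlin : Fin 3 → ℝ := ![1/10, 6/10, 3/10]

/-- At a first-order critical point (`f′(x) = 0`, `f″(x) ≠ 0`), the WENO-UD5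
nonlinear weights with exponent `p = 1` and `ε = 0` converge to the linear
weights with only second order of accuracy as `h → 0⁺`. -/
theorem wenoUD5_weights_p1_critical_second_order (f : ℝ → ℝ) (hf : ContDiff ℝ (⊤ : ℕ∞) f)
    (x : ℝ) (hx1 : deriv f x = 0) (hx2 : iteratedDeriv 2 f x ≠ 0)
    (hβ : ∀ k : Fin 3, ∀ᶠ h in 𝓝[>] (0:ℝ), betaLOC f x h k ≠ 0) :
    ∀ k : Fin 3,
      (fun h : ℝ =>
          (dlin k * (1 + zetaUD f x h / betaLOC f x h k))
            / (∑ l : Fin 3, dlin l * (1 + zetaUD f x h / betaLOC f x h l)) - dlin k)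
        =O[𝓝[>] (0:ℝ)] fun h => h ^ 2 := by
  obtain ⟨a2, ha2⟩ : ∃ a, iteratedDeriv 2 f x = a := ⟨_, rfl⟩
  obtain ⟨a3, ha3⟩ : ∃ a, iteratedDeriv 3 f x = a := ⟨_, rfl⟩
  rw [ha2] at hx2
  -- Taylor expansions on both sides
  have hgp : ContDiff ℝ (⊤ : ℕ∞) (fun t : ℝ => f (x + t)) := hf.comp (contDiff_const.add contDiff_id)
  have hgm : ContDiff ℝ (⊤ : ℕ∞) (fun t : ℝ => f (x + -t)) :=
    hf.comp (contDiff_const.add contDiff_id.neg)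
  have hdp : ∀ k : ℕ, iteratedDeriv k (fun t : ℝ => f (x + t)) 0 = iteratedDeriv k f x := by
    intro k; rw [iteratedDeriv_comp_const_add]; norm_num
  have hdm : ∀ k : ℕ, iteratedDeriv k (fun t : ℝ => f (x + -t)) 0
      = (-1 : ℝ)^k * iteratedDeriv k f x := by
    intro k
    rw [iteratedDeriv_comp_neg k (fun z : ℝ => f (x + z)) 0]
    rw [smul_eq_mul, neg_zero, hdp k]
  obtain ⟨Cp, hCp⟩ := taylor_aux _ hgp
  obtain ⟨Cm, hCm⟩ := taylor_aux _ hgm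
  have HP : ∀ t ∈ Set.Icc (0:ℝ) 1,
      |f (x + t) - (f x + a2 * t^2/2 + a3 * t^3/6)| ≤ Cp * t^4 := by
    intro t ht
    have h := hCp t ht
    rw [hdp 1, hdp 2, hdp 3, iteratedDeriv_one, hx1, ha2, ha3] at h
    simpa using h
  have HM : ∀ t ∈ Set.Icc (0:ℝ) 1,
      |f (x - t) - (f x + a2 * t^2/2 - a3 * t^3/6)| ≤ Cm * t^4 := by
    intro t ht
    have h := hCm t ht
    rw [hdm 1, hdm 2, hdm 3, iteratedDeriv_one, hx1, ha2, ha3] at h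
    rw [show x + -t = x - t from by ring] at h
    norm_num at h
    convert h using 2
    ring
  -- second-difference estimates
  have hmem : Set.Ioc (0:ℝ) (1/2) ∈ 𝓝[>] (0:ℝ) := Ioc_mem_nhdsGT (by norm_num)
  have hDm : (fun h : ℝ => (f (x - 2*h) - 2 * f (x - h) + f x) - (a2 * h^2 - a3 * h^3))
      =O[𝓝[>] (0:ℝ)] fun h => h^4 := by
    rw [isBigO_iff]
    refine ⟨18 * Cm, ?_⟩
    filter_upwards [hmem] with h hh
    have hIcc1 : h ∈ Set.Icc (0:ℝ) 1 := ⟨hh.1.le, hh.2.trans (by norm_num)⟩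
    have hIcc2 : 2*h ∈ Set.Icc (0:ℝ) 1 := ⟨by linarith [hh.1.le], by linarith [hh.2]⟩
    have e1 := HM h hIcc1
    have e2 := HM (2*h) hIcc2
    rw [Real.norm_eq_abs, Real.norm_eq_abs, abs_of_nonneg (pow_nonneg hh.1.le 4)]
    rw [show (f (x - 2*h) - 2 * f (x - h) + f x) - (a2 * h^2 - a3 * h^3)
        = (f (x - 2*h) - (f x + a2 * (2*h)^2/2 - a3 * (2*h)^3/6))
          - 2 * (f (x - h) - (f x + a2 * h^2/2 - a3 * h^3/6)) from by ring]
    have hq : (2*h)^4 = 16 * h^4 := by ring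
    obtain ⟨e1a, e1b⟩ := abs_le.mp e1
    obtain ⟨e2a, e2b⟩ := abs_le.mp e2
    rw [abs_le]
    constructor <;> nlinarith [hq]
  have hD0 : (fun h : ℝ => (f (x - h) - 2 * f x + f (x + h)) - a2 * h^2)
      =O[𝓝[>] (0:ℝ)] fun h => h^4 := by
    rw [isBigO_iff]
    refine ⟨Cm + Cp, ?_⟩
    filter_upwards [hmem] with h hh
    have hIcc1 : h ∈ Set.Icc (0:ℝ) 1 := ⟨hh.1.le, hh.2.trans (by norm_num)⟩
    have e1 := HM h hIcc1
    have e2 := HP h hIcc1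
    rw [Real.norm_eq_abs, Real.norm_eq_abs, abs_of_nonneg (pow_nonneg hh.1.le 4)]
    rw [show (f (x - h) - 2 * f x + f (x + h)) - a2 * h^2
        = (f (x - h) - (f x + a2 * h^2/2 - a3 * h^3/6))
          + (f (x + h) - (f x + a2 * h^2/2 + a3 * h^3/6)) from by ring]
    obtain ⟨e1a, e1b⟩ := abs_le.mp e1
    obtain ⟨e2a, e2b⟩ := abs_le.mp e2
    rw [abs_le]
    constructor <;> linarith
  have hDp : (fun h : ℝ => (f x - 2 * f (x + h) + f (x + 2*h)) - (a2 * h^2 + a3 * h^3))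
      =O[𝓝[>] (0:ℝ)] fun h => h^4 := by
    rw [isBigO_iff]
    refine ⟨18 * Cp, ?_⟩
    filter_upwards [hmem] with h hh
    have hIcc1 : h ∈ Set.Icc (0:ℝ) 1 := ⟨hh.1.le, hh.2.trans (by norm_num)⟩
    have hIcc2 : 2*h ∈ Set.Icc (0:ℝ) 1 := ⟨by linarith [hh.1.le], by linarith [hh.2]⟩
    have e1 := HP h hIcc1
    have e2 := HP (2*h) hIcc2
    rw [Real.norm_eq_abs, Real.norm_eq_abs, abs_of_nonneg (pow_nonneg hh.1.le 4)]
    rw [show (f x - 2 * f (x + h) + f (x + 2*h)) - (a2 * h^2 + a3 * h^3)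
        = (f (x + 2*h) - (f x + a2 * (2*h)^2/2 + a3 * (2*h)^3/6))
          - 2 * (f (x + h) - (f x + a2 * h^2/2 + a3 * h^3/6)) from by ring]
    have hq : (2*h)^4 = 16 * h^4 := by ring
    obtain ⟨e1a, e1b⟩ := abs_le.mp e1
    obtain ⟨e2a, e2b⟩ := abs_le.mp e2
    rw [abs_le]
    constructor <;> nlinarith [hq]
  -- polynomial big-O facts
  have h32 : (fun h : ℝ => h^3) =O[𝓝[>] (0:ℝ)] fun h => h^2 := pow_isBigO_aux (by norm_num)
  have h42 : (fun h : ℝ => h^4) =O[𝓝[>] (0:ℝ)] fun h => h^2 := pow_isBigO_aux (by norm_num)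
  have h22 : (fun h : ℝ => h^2) =O[𝓝[>] (0:ℝ)] fun h => h^2 := isBigO_refl _ _
  have hPm : (fun h : ℝ => a2 * h^2 - a3 * h^3) =O[𝓝[>] (0:ℝ)] fun h => h^2 :=
    (h22.const_mul_left a2).sub (h32.const_mul_left a3)
  have hP0 : (fun h : ℝ => a2 * h^2) =O[𝓝[>] (0:ℝ)] fun h => h^2 := h22.const_mul_left a2
  have hPp : (fun h : ℝ => a2 * h^2 + a3 * h^3) =O[𝓝[>] (0:ℝ)] fun h => h^2 :=
    (h22.const_mul_left a2).add (h32.const_mul_left a3)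
  -- sums D + P are O(h^2)
  have hDmS : (fun h : ℝ => (f (x - 2*h) - 2 * f (x - h) + f x) + (a2 * h^2 - a3 * h^3))
      =O[𝓝[>] (0:ℝ)] fun h => h^2 :=
    (((hDm.trans h42).add hPm).add hPm).congr_left (fun h => by ring)
  have hD0S : (fun h : ℝ => (f (x - h) - 2 * f x + f (x + h)) + a2 * h^2)
      =O[𝓝[>] (0:ℝ)] fun h => h^2 :=
    (((hD0.trans h42).add hP0).add hP0).congr_left (fun h => by ring)
  have hDpS : (fun h : ℝ => (f x - 2 * f (x + h) + f (x + 2*h)) + (a2 * h^2 + a3 * h^3))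
      =O[𝓝[>] (0:ℝ)] fun h => h^2 :=
    (((hDp.trans h42).add hPp).add hPp).congr_left (fun h => by ring)
  -- zeta is O(h^6)
  have hprodm := hDm.mul hDmS
  have hprod0 := hD0.mul hD0S
  have hprodp := hDp.mul hDpS
  have hconst : (fun h : ℝ => 2 * a3^2 * h^6) =O[𝓝[>] (0:ℝ)] fun h => h^6 :=
    (isBigO_refl _ _).const_mul_left _
  have h46 : (fun h : ℝ => h^4 * h^2) = fun h : ℝ => h^6 := by funext h; ring
  rw [h46] at hprodm hprod0 hprodp
  have hzeta : (fun h : ℝ => zetaUD f x h) =O[𝓝[>] (0:ℝ)] fun h => h^6 := by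
    have hF := ((hprodm.sub (hprod0.const_mul_left 2)).add hprodp).add hconst
    have hF' : (fun h : ℝ => (f (x - 2*h) - 2 * f (x - h) + f x)^2
        - 2 * (f (x - h) - 2 * f x + f (x + h))^2
        + (f x - 2 * f (x + h) + f (x + 2*h))^2) =O[𝓝[>] (0:ℝ)] fun h => h^6 :=
      hF.congr_left (fun h => by ring)
    exact (isBigO_abs_left.mpr hF' : _)
  -- beta lower bounds
  have hsqm := dsq_lb a2 (-a3) hx2 (fun h => f (x - 2*h) - 2 * f (x - h) + f x)
    (hDm.congr_left (fun h => by ring))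
  have hsq0 := dsq_lb a2 0 hx2 (fun h => f (x - h) - 2 * f x + f (x + h))
    (hD0.congr_left (fun h => by ring))
  have hsqp := dsq_lb a2 a3 hx2 (fun h => f x - 2 * f (x + h) + f (x + 2*h)) hDp
  have hc4 : 0 < a2^2/4 := by positivity
  have hβ0 : ∀ᶠ h in 𝓝[>] (0:ℝ), a2^2/4 * h^4 ≤ betaLOC f x h 0 := by
    filter_upwards [hsqm] with h hh
    simp only [betaLOC, Matrix.cons_val_zero]
    nlinarith [sq_nonneg (f (x - h) - f (x - 2*h)), sq_nonneg (f x - f (x - h))]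
  have hβ1 : ∀ᶠ h in 𝓝[>] (0:ℝ), a2^2/4 * h^4 ≤ betaLOC f x h 1 := by
    filter_upwards [hsq0] with h hh
    simp only [betaLOC, Matrix.cons_val_one, Matrix.head_cons, Matrix.cons_val_zero]
    nlinarith [sq_nonneg (f x - f (x - h)), sq_nonneg (f (x + h) - f x)]
  have hβ2 : ∀ᶠ h in 𝓝[>] (0:ℝ), a2^2/4 * h^4 ≤ betaLOC f x h 2 := by
    filter_upwards [hsqp] with h hh
    simp only [betaLOC, Matrix.cons_val_two, Matrix.tail_cons, Matrix.head_cons]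
    nlinarith [sq_nonneg (f (x + h) - f x), sq_nonneg (f (x + 2*h) - f (x + h))]
  -- zeta eventual bound
  obtain ⟨Cz, hCz⟩ := isBigO_iff.mp hzeta
  have hzb : ∀ᶠ h in 𝓝[>] (0:ℝ), |zetaUD f x h| ≤ max Cz 0 * h^6 := by
    filter_upwards [hCz, self_mem_nhdsWithin] with h h1 hpos
    rw [Set.mem_Ioi] at hpos
    rw [Real.norm_eq_abs, Real.norm_eq_abs, abs_of_nonneg (pow_nonneg hpos.le 6)] at h1
    nlinarith [pow_nonneg hpos.le 6, le_max_left Cz 0]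
  set K : ℝ := max Cz 0 / (a2^2/4) with hKdef
  have hK : 0 ≤ K := by positivity
  have hr0 := r_bound_aux _ _ _ _ hc4 (le_max_right Cz 0) hzb hβ0
  have hr1 := r_bound_aux _ _ _ _ hc4 (le_max_right Cz 0) hzb hβ1
  have hr2 := r_bound_aux _ _ _ _ hc4 (le_max_right Cz 0) hzb hβ2
  rw [← hKdef] at hr0 hr1 hr2
  -- finish
  intro k
  rw [isBigO_iff]
  refine ⟨3 * K, ?_⟩
  filter_upwards [hr0, hr1, hr2, (ev_small_aux K (1/4) 1 (by norm_num)), self_mem_nhdsWithin]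
    with h h0 h1 h2 hsm hpos
  rw [Set.mem_Ioi] at hpos
  have hsm' : K * h^2 ≤ 1/4 := by
    have : h^(1+1) = h^2 := by norm_num
    rw [this] at hsm; linarith
  rw [Real.norm_eq_abs, Real.norm_eq_abs, abs_of_nonneg (pow_nonneg hpos.le 2)]
  simp only [Fin.sum_univ_three]
  fin_cases k
  · have := aux_final (1/10) _ _ _ _ (h^2) K (by norm_num) (by norm_num) h0 h1 h2
      (Or.inl rfl) hsm'
    simp only [dlin, Matrix.cons_val_zero, Matrix.cons_val_one, Matrix.head_cons,
      Matrix.cons_val_two, Matrix.tail_cons]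
    calc _ ≤ 3 * (K * h^2) := this
      _ = 3 * K * h^2 := by ring
  · have := aux_final (6/10) _ _ _ _ (h^2) K (by norm_num) (by norm_num) h0 h1 h2
      (Or.inr (Or.inl rfl)) hsm'
    simp only [dlin, Matrix.cons_val_zero, Matrix.cons_val_one, Matrix.head_cons,
      Matrix.cons_val_two, Matrix.tail_cons]
    calc _ ≤ 3 * (K * h^2) := this
      _ = 3 * K * h^2 := by ring
  · have := aux_final (3/10) _ _ _ _ (h^2) K (by norm_num) (by norm_num) h0 h1 h2
      (Or.inr (Or.inr rfl)) hsm'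
    simp only [dlin, Matrix.cons_val_zero, Matrix.cons_val_one, Matrix.head_cons,
      Matrix.cons_val_two, Matrix.tail_cons]
    calc _ ≤ 3 * (K * h^2) := this
      _ = 3 * K * h^2 := by ring
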